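/- Let e ∈ S be an idempotent, λ ∈ J_e^* regular in J_e^*, and let θ, θ' : H_{e'} → ℂ^× be group homomorphisms with θ ≠ θ'. Then the induced characters χ_{θ,λ} and χ_{θ',λ} are disjoint; in particular ⟨χ_{θ,λ}, χ_{θ',λ}⟩ = |G|⁻¹ · Σ_{g∈G} χ_{θ,λ}(g) · conj(χ_{θ',λ}(g)) = 0. -/

import Mathlib

/-- `h ∈ H = S^×`: `h` lies in `S` and is invertible with inverse in `S`. -/
def MemH {F A : Type*} [Field F] [Ring A] [Algebra F A]
    (S : Subalgebra F A) (h : A) : Prop :=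
  h ∈ S ∧ ∃ h' ∈ S, h * h' = 1 ∧ h' * h = 1

/-- `h ∈ H_{e'} = {h ∈ H : h * e = e * h = e}`. -/
def MemHePrime {F A : Type*} [Field F] [Ring A] [Algebra F A]
    (S : Subalgebra F A) (e h : A) : Prop :=
  MemH S h ∧ h * e = e ∧ e * h = e

/-- The set `G_λ = {h + x : h ∈ H_{e'}, x ∈ J, λ(xu) = 0 for all u ∈ J}`. -/
def GlamSet {F A : Type*} [Field F] [Ring A] [Algebra F A]
    (J : Ideal A) (hJr : ∀ x ∈ J, ∀ a : A, x * a ∈ J) (S : Subalgebra F A) (e : A)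
    (lam : (Submodule.restrictScalars F J) →ₗ[F] F) : Set A :=
  {g | ∃ h x : A, MemHePrime S e h ∧
    (∃ hx : x ∈ J, ∀ u (_ : u ∈ J), lam ⟨x * u, hJr x hx u⟩ = 0) ∧ g = h + x}

/-- The linear character `ξ_{θ,λ}(h + x) = θ(h) · ε(λ(x))`, written using the projections
onto `S` and `J` coming from the decomposition `A = S ⊕ J`. -/
noncomputable def xiFun {F A : Type*} [Field F] [Ring A] [Algebra F A]
    (J : Ideal A) (S : Subalgebra F A)
    (hS : IsCompl (Subalgebra.toSubmodule S) (Submodule.restrictScalars F J))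
    (θ : A → ℂ) (ε : F → ℂ)
    (lam : (Submodule.restrictScalars F J) →ₗ[F] F) (g : A) : ℂ :=
  θ ((Submodule.linearProjOfIsCompl _ _ hS g : A)) *
    ε (lam (Submodule.linearProjOfIsCompl _ _ hS.symm g))

/-- The induced (super)character `χ_{θ,λ}(g) = |G_λ|⁻¹ · Σ_{s ∈ G, s⁻¹gs ∈ G_λ} ξ(s⁻¹gs)`,
where `G = Aˣ`. -/
noncomputable def chiFun {F A : Type*} [Field F] [Ring A] [Algebra F A]
    (J : Ideal A) (hJr : ∀ x ∈ J, ∀ a : A, x * a ∈ J) (S : Subalgebra F A)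
    (hS : IsCompl (Subalgebra.toSubmodule S) (Submodule.restrictScalars F J))
    (e : A) (θ : A → ℂ) (ε : F → ℂ)
    (lam : (Submodule.restrictScalars F J) →ₗ[F] F) (g : A) : ℂ :=
  (Nat.card (GlamSet J hJr S e lam) : ℂ)⁻¹ *
    ∑ᶠ s ∈ {s : Aˣ | ((s⁻¹ : Aˣ) : A) * g * (s : A) ∈ GlamSet J hJr S e lam},
      xiFun J S hS θ ε lam (((s⁻¹ : Aˣ) : A) * g * (s : A))

/-!
By Mackey's formula the inner product of `χ_{θ,λ}` and `χ_{θ',λ}` is a multiple of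
`∑_w ∑_{u ∈ G_λ ∩ w G_λ w⁻¹} ξ_{θ,λ}(u) · conj ξ_{θ',λ}(w⁻¹ u w)`, and each inner sum is a sum of a
linear character of `G_λ ∩ w G_λ w⁻¹`; so it suffices to find, for every `w`, some `u` there with
`ξ_{θ,λ}(u) ≠ ξ_{θ',λ}(w⁻¹ u w)`. Write `G_λ = H_{e'} + R` with `R = {x ∈ J | λ(x J) = 0}`.

If conjugation by `w` changes the value of `λ` at some `x ∈ R ∩ w R w⁻¹`, then `u = 1 + c x` for a
suitable scalar `c` works, because `ε` is nontrivial. Otherwise a descending induction along the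
powers of the nilpotent ideal `J` gives `λ(w⁻¹ h w · t) = λ(t)` for `h ∈ H_{e'}`, `t ∈ J`; then
`u = h` with `θ(h) ≠ θ'(h)` lies in `G_λ ∩ w G_λ w⁻¹` and the two values are `θ(h)` and
`θ'(h) ε(b)`. These differ, since the order of `h` is prime to `p = char F` (the algebra `A / J`
is commutative, so `S ≅ A / J` has no nonzero nilpotents) while `ε(b)` is a `p`-th root of unity.
-/

open Finset ComplexConjugate

theorem eq_of_eq_mul_of_coprime {M : Type*} [CommMonoid M] {x y ω : M} {m p : ℕ}
    (hmp : m.Coprime p) (hx : x ^ m = 1) (hy : y ^ m = 1) (hω : ω ^ p = 1) (h : x = y * ω) :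
    x = y := by
  have hωm : ω ^ m = 1 := by rwa [h, mul_pow, hy, one_mul] at hx
  have hω1 : ω = 1 := by simpa [hmp] using pow_gcd_eq_one.mpr ⟨hωm, hω⟩
  rw [h, hω1, mul_one]

theorem Ideal.induction_of_isNilpotent {R : Type*} [Semiring R] {J : Ideal R}
    (hJ : IsNilpotent J) {P : R → Prop} (h0 : P 0)
    (hstep : ∀ t ∈ J, (∀ u ∈ J, P (t * u)) → P t) {t : R} (ht : t ∈ J) : P t := by
  obtain ⟨n, hn⟩ := hJ
  suffices ∀ d k, n ≤ k + 1 + d → ∀ t ∈ J ^ (k + 1), P t from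
    this n 0 (by omega) t (by rwa [zero_add, Submodule.pow_one])
  intro d
  induction d with
  | zero =>
    intro k hk t ht
    have ht0 : t ∈ J ^ n := Ideal.pow_le_pow_right hk ht
    rw [hn, Submodule.zero_eq_bot, Submodule.mem_bot] at ht0
    exact ht0 ▸ h0
  | succ d ih =>
    exact fun k hk t ht => hstep t (Ideal.pow_le_self k.succ_ne_zero ht) fun u hu =>
      ih (k + 1) (by omega) _ (by rw [Submodule.pow_succ]; exact Ideal.mul_mem_mul ht hu)

section Jacobson

variable {R : Type*} [Ring R] [IsArtinianRing R]

theorem isNilpotent_of_mem_jacobson_bot {x : R} (hx : x ∈ (⊥ : Ideal R).jacobson) :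
    IsNilpotent x := by
  obtain ⟨n, hn⟩ := IsArtinianRing.isNilpotent_jacobson_bot (R := R)
  exact ⟨n, by simpa [hn] using Ideal.pow_mem_pow hx n⟩

theorem mem_jacobson_bot_of_isNilpotent
    (hcomm : ∀ a b : R, a * b - b * a ∈ (⊥ : Ideal R).jacobson) {s : R} (hs : IsNilpotent s) :
    s ∈ (⊥ : Ideal R).jacobson := by
  rw [Ideal.jacobson_bot] at hcomm ⊢
  obtain ⟨N, hN⟩ := hs
  -- `y * s` is nilpotent modulo the radical since the quotient is commutative, and the radical
  -- itself is nilpotent.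
  have hys (y : R) : IsNilpotent (y * s) := by
    have hcomm' : Commute (Ideal.Quotient.mk (Ring.jacobson R) y) (Ideal.Quotient.mk _ s) := by
      rw [Commute, SemiconjBy, ← map_mul, ← map_mul, Ideal.Quotient.mk_eq_mk_iff_sub_mem]
      exact hcomm y s
    have hmem : (y * s) ^ N ∈ Ring.jacobson R := by
      rw [← Ideal.Quotient.eq_zero_iff_mem, map_pow, map_mul, hcomm'.mul_pow, ← map_pow _ s, hN,
        map_zero, mul_zero]
    obtain ⟨M, hM⟩ := isNilpotent_of_mem_jacobson_bot (Ideal.jacobson_bot (R := R) ▸ hmem)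
    exact ⟨N * M, by rw [pow_mul, hM]⟩
  refine Ideal.jacobson_bot (R := R) ▸ Ideal.mem_jacobson_iff.mpr fun y => ?_
  obtain ⟨u, hu⟩ := (hys y).isUnit_add_one
  refine ⟨↑u⁻¹, ?_⟩
  rw [Ideal.mem_bot, mul_assoc, ← mul_add_one, ← hu, Units.inv_mul, sub_self]

end Jacobson

section Mackey

variable {G : Type*} [Group G] [Fintype G]

theorem sum_induced_mul_conj_induced (H : Set G) [DecidablePred (· ∈ H)] (f f' : G → ℂ) :
    ∑ g, (∑ s with s⁻¹ * g * s ∈ H, f (s⁻¹ * g * s)) *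
        conj (∑ t with t⁻¹ * g * t ∈ H, f' (t⁻¹ * g * t)) =
      Fintype.card G * ∑ w, ∑ u with u ∈ H ∧ w⁻¹ * u * w ∈ H, f u * conj (f' (w⁻¹ * u * w)) := by
  set M : G → ℂ := fun w => ∑ u with u ∈ H ∧ w⁻¹ * u * w ∈ H, f u * conj (f' (w⁻¹ * u * w))
  have hterm (s t : G) : ∑ g, (if s⁻¹ * g * s ∈ H then f (s⁻¹ * g * s) else 0) *
      conj (if t⁻¹ * g * t ∈ H then f' (t⁻¹ * g * t) else 0) = M (s⁻¹ * t) := by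
    simp only [M, sum_filter]
    refine Fintype.sum_equiv (MulAut.conj s⁻¹).toEquiv _ _ fun g => ?_
    have h : t⁻¹ * g * t = (s⁻¹ * t)⁻¹ * (s⁻¹ * g * s) * (s⁻¹ * t) := by group
    simp only [MulEquiv.toEquiv_eq_coe, MulEquiv.coe_toEquiv, MulAut.conj_apply, inv_inv, h]
    split_ifs <;> simp_all
  calc _ = ∑ s, ∑ t, M (s⁻¹ * t) := by
        simp_rw [sum_filter, map_sum, sum_mul_sum]
        rw [sum_comm]
        refine sum_congr rfl fun s _ => ?_
        rw [sum_comm]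
        exact sum_congr rfl fun t _ => hterm s t
    _ = ∑ _s : G, ∑ w, M w := sum_congr rfl fun s _ =>
        Fintype.sum_equiv (Equiv.mulLeft s⁻¹) _ _ fun _ => rfl
    _ = _ := by rw [sum_const, card_univ, nsmul_eq_mul]

def IsLinearCharOn (H : Subgroup G) (f : G → ℂ) : Prop :=
  f 1 = 1 ∧ ∀ a ∈ H, ∀ b ∈ H, f (a * b) = f a * f b

theorem IsLinearCharOn.norm_eq_one {H : Subgroup G} {f : G → ℂ} (hf : IsLinearCharOn H f)
    {x : G} (hx : x ∈ H) : ‖f x‖ = 1 := by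
  have hpow (n : ℕ) : f (x ^ n) = f x ^ n := by
    induction n with
    | zero => rw [pow_zero, pow_zero, hf.1]
    | succ n ih => rw [pow_succ, hf.2 _ (H.pow_mem hx n) _ hx, ih, pow_succ]
  refine Complex.norm_eq_one_of_pow_eq_one ?_ (orderOf_pos x).ne'
  rw [← hpow, pow_orderOf_eq_one, hf.1]

theorem sum_mul_conj_conjugate_eq_zero {H : Subgroup G} [DecidablePred (· ∈ H)] {f f' : G → ℂ}
    (hf : IsLinearCharOn H f) (hf' : IsLinearCharOn H f') {w u : G} (hu : u ∈ H)
    (hwu : w⁻¹ * u * w ∈ H) (hne : f u ≠ f' (w⁻¹ * u * w)) :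
    ∑ v with v ∈ H ∧ w⁻¹ * v * w ∈ H, f v * conj (f' (w⁻¹ * v * w)) = 0 := by
  classical
  set K : Subgroup G := H ⊓ H.comap (MulAut.conj w⁻¹).toMonoidHom
  have hK (v : G) : v ∈ K ↔ v ∈ H ∧ w⁻¹ * v * w ∈ H := by simp [K]
  let ψ : K →* ℂ :=
    { toFun := fun v => f v * conj (f' (w⁻¹ * v * w))
      map_one' := by simp [hf.1, hf'.1]
      map_mul' := fun a b => by
        have hab : w⁻¹ * (a * b) * w = (w⁻¹ * a * w) * (w⁻¹ * b * w) := by group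
        simp only [Subgroup.coe_mul, hab, hf.2 _ ((hK a).1 a.2).1 _ ((hK b).1 b.2).1,
          hf'.2 _ ((hK a).1 a.2).2 _ ((hK b).1 b.2).2, map_mul]
        ring }
  have hψ : ψ ≠ 1 := fun h => hne <| by
    have h1 : f u * conj (f' (w⁻¹ * u * w)) = 1 := DFunLike.congr_fun h ⟨u, (hK u).2 ⟨hu, hwu⟩⟩
    have hnorm := hf'.norm_eq_one hwu
    rwa [← Complex.inv_eq_conj hnorm, mul_inv_eq_one₀ (norm_ne_zero_iff.mp (by simp [hnorm]))]
      at h1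
  rw [sum_subtype _ (p := (· ∈ K)) (fun v => by simp [hK])]
  exact sum_hom_units_eq_zero ψ hψ

theorem sum_induced_mul_conj_induced_eq_zero (H : Subgroup G) [DecidablePred (· ∈ H)]
    {f f' : G → ℂ} (hf : IsLinearCharOn H f) (hf' : IsLinearCharOn H f')
    (hsep : ∀ w, ∃ u ∈ H, w⁻¹ * u * w ∈ H ∧ f u ≠ f' (w⁻¹ * u * w)) :
    ∑ g, (∑ s with s⁻¹ * g * s ∈ H, f (s⁻¹ * g * s)) *
      conj (∑ t with t⁻¹ * g * t ∈ H, f' (t⁻¹ * g * t)) = 0 := by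
  refine (sum_induced_mul_conj_induced (H : Set G) f f').trans ?_
  rw [sum_eq_zero fun w _ => ?_, mul_zero]
  obtain ⟨u, hu, hwu, hne⟩ := hsep w
  exact sum_mul_conj_conjugate_eq_zero hf hf' hu hwu hne

end Mackey

section Radical

variable {F A : Type*} [Field F] [Ring A] [Algebra F A] {J : Ideal A} {L : A →ₗ[F] F} {e : A}

/-- The condition `λ ∈ J_e^*`. -/
def IsCornerInvariant (J : Ideal A) (e : A) (L : A →ₗ[F] F) : Prop :=
  ∀ x ∈ J, L (e * x * e) = L x

variable (J L) in
def lamRadical : Submodule F A where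
  carrier := {x | x ∈ J ∧ ∀ u ∈ J, L (x * u) = 0}
  add_mem' := fun ⟨hx, hxu⟩ ⟨hy, hyu⟩ =>
    ⟨J.add_mem hx hy, fun u hu => by rw [add_mul, map_add, hxu u hu, hyu u hu, add_zero]⟩
  zero_mem' := ⟨J.zero_mem, fun u _ => by rw [zero_mul, map_zero]⟩
  smul_mem' := fun c x ⟨hx, hxu⟩ => ⟨J.smul_of_tower_mem c hx,
    fun u hu => by rw [smul_mul_assoc, map_smul, hxu u hu, smul_zero]⟩

theorem IsCornerInvariant.map_mul_left (hL : IsCornerInvariant J e L) {h x : A} (heh : e * h = e)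
    (hx : x ∈ J) : L (h * x) = L x := by
  rw [← hL _ (J.mul_mem_left h hx), ← mul_assoc, heh, hL x hx]

theorem IsCornerInvariant.map_mul_right (hJr : ∀ x ∈ J, ∀ a : A, x * a ∈ J)
    (hL : IsCornerInvariant J e L) {h x : A} (hhe : h * e = e) (hx : x ∈ J) :
    L (x * h) = L x := by
  rw [← hL _ (hJr x hx h), mul_assoc, mul_assoc x, hhe, ← mul_assoc, hL x hx]

theorem mul_mem_lamRadical (hJr : ∀ x ∈ J, ∀ a : A, x * a ∈ J) {x : A}
    (hx : x ∈ lamRadical J L) (a : A) : x * a ∈ lamRadical J L :=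
  ⟨hJr x hx.1 a, fun u hu => by rw [mul_assoc]; exact hx.2 _ (J.mul_mem_left a hu)⟩

theorem mul_mem_lamRadical_of_mul_eq (hJr : ∀ x ∈ J, ∀ a : A, x * a ∈ J)
    (hL : IsCornerInvariant J e L) {h x : A} (heh : e * h = e) (hx : x ∈ lamRadical J L) :
    h * x ∈ lamRadical J L :=
  ⟨J.mul_mem_left h hx.1, fun u hu => by
    rw [mul_assoc, hL.map_mul_left heh (hJr x hx.1 u), hx.2 u hu]⟩

theorem mem_lamRadical_and_map_eq (hJr : ∀ x ∈ J, ∀ a : A, x * a ∈ J)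
    (hL : IsCornerInvariant J e L) {h₁ h₂ x₁ x₂ : A} (heh₁ : e * h₁ = e) (hh₂e : h₂ * e = e)
    (hx₁ : x₁ ∈ lamRadical J L) (hx₂ : x₂ ∈ lamRadical J L) :
    h₁ * x₂ + x₁ * (h₂ + x₂) ∈ lamRadical J L ∧ L (h₁ * x₂ + x₁ * (h₂ + x₂)) = L x₁ + L x₂ := by
  refine ⟨add_mem (mul_mem_lamRadical_of_mul_eq hJr hL heh₁ hx₂) (mul_mem_lamRadical hJr hx₁ _),
    ?_⟩
  rw [map_add, mul_add, map_add, hL.map_mul_left heh₁ hx₂.1, hL.map_mul_right hJr hh₂e hx₁.1,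
    hx₁.2 x₂ hx₂.1, add_zero, add_comm]

theorem map_conj_mul_eq_of_map_conj_eq (hJr : ∀ x ∈ J, ∀ a : A, x * a ∈ J)
    (hJn : IsNilpotent J) (w : Aˣ)
    (hconj : ∀ x ∈ lamRadical J L, ↑w⁻¹ * x * ↑w ∈ lamRadical J L → L (↑w⁻¹ * x * ↑w) = L x)
    {h : A} (hh : ∀ y ∈ J, L (h * y) = L y) {t : A} (ht : t ∈ J) :
    L (↑w⁻¹ * h * ↑w * t) = L t := by
  refine Ideal.induction_of_isNilpotent hJn (P := fun t => L (↑w⁻¹ * h * ↑w * t) = L t)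
    (by simp) (fun t ht ih => ?_) ht
  set z : A := ↑w * t * ↑w⁻¹
  have hz : z ∈ J := hJr _ (J.mul_mem_left _ ht) _
  have hx : h * z - z ∈ lamRadical J L := ⟨J.sub_mem (J.mul_mem_left h hz) hz, fun u hu => by
    rw [sub_mul, map_sub, mul_assoc, hh _ (hJr z hz u), sub_self]⟩
  have hcx : ↑w⁻¹ * (h * z - z) * ↑w = ↑w⁻¹ * h * ↑w * t - t := by
    simp [z, mul_sub, sub_mul, mul_assoc]
  have hcx' : ↑w⁻¹ * h * ↑w * t - t ∈ lamRadical J L :=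
    ⟨J.sub_mem (J.mul_mem_left _ ht) ht, fun u hu => by
      rw [sub_mul, map_sub, mul_assoc _ t u, ih u hu, sub_self]⟩
  have key := hconj _ hx (hcx ▸ hcx')
  rwa [hcx, map_sub, map_sub, hh z hz, sub_self, sub_eq_zero] at key

end Radical

section Setting

variable {F A : Type*} [Field F] [Ring A] [Algebra F A] {J : Ideal A} {S : Subalgebra F A}
  {e : A}

def IsMulOnHePrime {M : Type*} [Mul M] (S : Subalgebra F A) (e : A) (θ : A → M) : Prop :=
  ∀ h h' : A, MemHePrime S e h → MemHePrime S e h' → θ (h * h') = θ h * θ h'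

theorem MemHePrime.one : MemHePrime S e 1 :=
  ⟨⟨S.one_mem, 1, S.one_mem, one_mul 1, one_mul 1⟩, one_mul e, mul_one e⟩

theorem MemHePrime.mul {h h' : A} (hh : MemHePrime S e h) (hh' : MemHePrime S e h') :
    MemHePrime S e (h * h') := by
  obtain ⟨⟨hS, k, hkS, hk, hk'⟩, he, he'⟩ := hh
  obtain ⟨⟨hS', l, hlS, hl, hl'⟩, hle, hle'⟩ := hh'
  refine ⟨⟨S.mul_mem hS hS', l * k, S.mul_mem hlS hkS, ?_, ?_⟩, ?_, ?_⟩
  · rw [mul_assoc, ← mul_assoc h', hl, one_mul, hk]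
  · rw [mul_assoc, ← mul_assoc k, hk', one_mul, hl']
  · rw [mul_assoc, hle, he]
  · rw [← mul_assoc, he', hle']

theorem MemHePrime.pow {h : A} (hh : MemHePrime S e h) (n : ℕ) : MemHePrime S e (h ^ n) := by
  induction n with
  | zero => exact pow_zero h ▸ MemHePrime.one
  | succ n ih => exact pow_succ h n ▸ ih.mul hh

theorem IsMulOnHePrime.map_one {θ : A → ℂ} (hθ : IsMulOnHePrime S e θ)
    (hθ0 : ∀ h : A, MemHePrime S e h → θ h ≠ 0) : θ 1 = 1 :=
  (mul_eq_left₀ (hθ0 1 MemHePrime.one)).mp (by rw [← hθ _ _ .one .one, mul_one])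

theorem IsMulOnHePrime.map_pow_orderOf {M : Type*} [Monoid M] {θ : A → M}
    (hθ : IsMulOnHePrime S e θ) (hθ1 : θ 1 = 1) {v : Aˣ} (hv : MemHePrime S e v) :
    θ v ^ orderOf v = 1 := by
  have hpow (n : ℕ) : θ (↑v ^ n) = θ v ^ n := by
    induction n with
    | zero => rw [pow_zero, pow_zero, hθ1]
    | succ n ih => rw [pow_succ, hθ _ _ (hv.pow n) hv, ih, pow_succ]
  rw [← hpow, ← Units.val_pow_eq_pow_val, pow_orderOf_eq_one, Units.val_one, hθ1]

theorem eq_one_of_pow_eq_one_of_mem (p : ℕ) [Fact p.Prime] [CharP F p]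
    (hSJ : Disjoint (Subalgebra.toSubmodule S) (Submodule.restrictScalars F J))
    (hnil : ∀ s : A, IsNilpotent s → s ∈ J) {v : A} (hv : v ∈ S) (hvp : v ^ p = 1) : v = 1 := by
  rcases subsingleton_or_nontrivial A with hA | hA
  · exact Subsingleton.elim _ _
  have := charP_of_injective_algebraMap' F (A := A) p
  have hnilv : IsNilpotent (v - 1) :=
    ⟨p, by rw [sub_pow_char_of_commute p (Commute.one_right v), one_pow, hvp, sub_self]⟩
  exact sub_eq_zero.mp (Submodule.disjoint_def.mp hSJ _ (S.sub_mem hv S.one_mem) (hnil _ hnilv))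

theorem coprime_orderOf_of_mem [Finite A] (p : ℕ) [hp : Fact p.Prime] [CharP F p]
    (hSJ : Disjoint (Subalgebra.toSubmodule S) (Submodule.restrictScalars F J))
    (hnil : ∀ s : A, IsNilpotent s → s ∈ J) {v : Aˣ} (hv : ↑v ∈ S) :
    (orderOf v).Coprime p := by
  rw [Nat.coprime_comm, hp.out.coprime_iff_not_dvd]
  rintro ⟨k, hk⟩
  have hpos := orderOf_pos v
  have hk0 : k ≠ 0 := by rintro rfl; omega
  refine pow_ne_one_of_lt_orderOf hk0 (by nlinarith [hp.out.two_le]) (Units.ext ?_)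
  refine eq_one_of_pow_eq_one_of_mem p hSJ hnil (Units.val_pow_eq_pow_val v k ▸ pow_mem hv k) ?_
  rw [← Units.val_pow_eq_pow_val, ← pow_mul, mul_comm, ← hk, pow_orderOf_eq_one, Units.val_one]

variable (hS : IsCompl (Subalgebra.toSubmodule S) (Submodule.restrictScalars F J))
  (lam : Submodule.restrictScalars F J →ₗ[F] F) (hJr : ∀ x ∈ J, ∀ a : A, x * a ∈ J)

noncomputable def extendLam : A →ₗ[F] F :=
  lam ∘ₗ Submodule.projectionOnto _ _ hS.symm

theorem extendLam_of_mem {x : A} (hx : x ∈ J) : extendLam hS lam x = lam ⟨x, hx⟩ :=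
  congrArg lam (Submodule.projectionOnto_apply_of_mem_left hS.symm hx)

theorem extendLam_add_of_mem {s x : A} (hs : s ∈ S) :
    extendLam hS lam (s + x) = extendLam hS lam x := by
  rw [map_add, extendLam, LinearMap.comp_apply,
    Submodule.projectionOnto_apply_of_mem_right hS.symm hs, map_zero, zero_add]

theorem xiFun_add (θ : A → ℂ) (ε : F → ℂ) {s x : A} (hs : s ∈ S) (hx : x ∈ J) :
    xiFun J S hS θ ε lam (s + x) = θ s * ε (extendLam hS lam x) := by
  rw [xiFun, ← extendLam_add_of_mem hS lam hs]
  congr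
  unfold Submodule.linearProjOfIsCompl
  rw [map_add, Submodule.projectionOnto_apply_of_mem_right hS hx, add_zero,
    Submodule.projectionOnto_apply_of_mem_left hS hs]

theorem mem_GlamSet_iff {g : A} :
    g ∈ GlamSet J hJr S e lam ↔
      ∃ h x, MemHePrime S e h ∧ x ∈ lamRadical J (extendLam hS lam) ∧ g = h + x := by
  simp only [GlamSet, lamRadical, Set.mem_ofPred_eq]
  refine exists₂_congr fun h x => and_congr_right' (and_congr_left' ⟨?_, ?_⟩)
  · rintro ⟨hx, hxu⟩
    exact ⟨hx, fun u hu => by rw [extendLam_of_mem hS lam (hJr x hx u)]; exact hxu u hu⟩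
  · rintro ⟨hx, hxu⟩
    exact ⟨hx, fun u hu => by rw [← extendLam_of_mem hS lam (hJr x hx u)]; exact hxu u hu⟩

theorem add_mem_GlamSet {h x : A} (hh : MemHePrime S e h)
    (hx : x ∈ lamRadical J (extendLam hS lam)) : h + x ∈ GlamSet J hJr S e lam :=
  (mem_GlamSet_iff hS lam hJr).mpr ⟨h, x, hh, hx, rfl⟩

theorem mul_mem_GlamSet (hL : IsCornerInvariant J e (extendLam hS lam)) {a b : A}
    (ha : a ∈ GlamSet J hJr S e lam) (hb : b ∈ GlamSet J hJr S e lam) :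
    a * b ∈ GlamSet J hJr S e lam := by
  obtain ⟨h₁, x₁, hh₁, hx₁, rfl⟩ := (mem_GlamSet_iff hS lam hJr).mp ha
  obtain ⟨h₂, x₂, hh₂, hx₂, rfl⟩ := (mem_GlamSet_iff hS lam hJr).mp hb
  rw [show (h₁ + x₁) * (h₂ + x₂) = h₁ * h₂ + (h₁ * x₂ + x₁ * (h₂ + x₂)) by noncomm_ring]
  exact add_mem_GlamSet hS lam hJr (hh₁.mul hh₂)
    (mem_lamRadical_and_map_eq hJr hL hh₁.2.2 hh₂.2.1 hx₁ hx₂).1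

theorem xiFun_mul (hL : IsCornerInvariant J e (extendLam hS lam)) {θ : A → ℂ}
    (hθ : IsMulOnHePrime S e θ) (ε : AddChar F ℂ) {a b : A}
    (ha : a ∈ GlamSet J hJr S e lam) (hb : b ∈ GlamSet J hJr S e lam) :
    xiFun J S hS θ ε lam (a * b) = xiFun J S hS θ ε lam a * xiFun J S hS θ ε lam b := by
  obtain ⟨h₁, x₁, hh₁, hx₁, rfl⟩ := (mem_GlamSet_iff hS lam hJr).mp ha
  obtain ⟨h₂, x₂, hh₂, hx₂, rfl⟩ := (mem_GlamSet_iff hS lam hJr).mp hb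
  obtain ⟨hy, hLy⟩ := mem_lamRadical_and_map_eq hJr hL hh₁.2.2 hh₂.2.1 hx₁ hx₂
  rw [show (h₁ + x₁) * (h₂ + x₂) = h₁ * h₂ + (h₁ * x₂ + x₁ * (h₂ + x₂)) by noncomm_ring,
    xiFun_add hS lam θ ε (hh₁.mul hh₂).1.1 hy.1, xiFun_add hS lam θ ε hh₁.1.1 hx₁.1,
    xiFun_add hS lam θ ε hh₂.1.1 hx₂.1, hθ _ _ hh₁ hh₂, hLy, AddChar.map_add_eq_mul]
  ring

noncomputable def glamSubmonoid (hL : IsCornerInvariant J e (extendLam hS lam)) :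
    Submonoid Aˣ where
  carrier := {u | (u : A) ∈ GlamSet J hJr S e lam}
  one_mem' := by
    rw [Set.mem_ofPred_eq, Units.val_one, ← add_zero 1]
    exact add_mem_GlamSet hS lam hJr MemHePrime.one (zero_mem _)
  mul_mem' := fun ha hb => by
    rw [Set.mem_ofPred_eq, Units.val_mul]; exact mul_mem_GlamSet hS lam hJr hL ha hb

noncomputable def glamSubgroup [Finite A] (hL : IsCornerInvariant J e (extendLam hS lam)) :
    Subgroup Aˣ :=
  { glamSubmonoid hS lam hJr hL with
    inv_mem' := fun hu => Submonoid.powers_le.mpr hu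
      (mem_powers_iff_mem_zpowers.mpr (inv_mem (Subgroup.mem_zpowers _))) }

theorem mem_glamSubgroup [Finite A] (hL : IsCornerInvariant J e (extendLam hS lam)) {u : Aˣ} :
    u ∈ glamSubgroup hS lam hJr hL ↔ ↑u ∈ GlamSet J hJr S e lam :=
  Iff.rfl

theorem isLinearCharOn_xiFun [Finite A] (hL : IsCornerInvariant J e (extendLam hS lam))
    {θ : A → ℂ} (hθ : IsMulOnHePrime S e θ) (hθ1 : θ 1 = 1) (ε : AddChar F ℂ) :
    IsLinearCharOn (glamSubgroup hS lam hJr hL) fun u => xiFun J S hS θ ε lam u := by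
  refine ⟨?_, fun a ha b hb => ?_⟩
  · beta_reduce
    rw [Units.val_one, ← add_zero 1, xiFun_add hS lam θ ε S.one_mem J.zero_mem, hθ1, map_zero,
      AddChar.map_zero_eq_one, mul_one]
  · exact (congrArg _ (Units.val_mul a b)).trans (xiFun_mul hS lam hJr hL hθ ε ha hb)

theorem chiFun_eq_sum [Finite A] [Fintype Aˣ] (hL : IsCornerInvariant J e (extendLam hS lam))
    [DecidablePred (· ∈ glamSubgroup hS lam hJr hL)] (θ : A → ℂ) (ε : F → ℂ) (g : Aˣ) :
    chiFun J hJr S hS e θ ε lam g = (Nat.card (GlamSet J hJr S e lam) : ℂ)⁻¹ *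
      ∑ s with s⁻¹ * g * s ∈ glamSubgroup hS lam hJr hL, xiFun J S hS θ ε lam ↑(s⁻¹ * g * s) := by
  rw [chiFun, finsum_mem_eq_finite_toFinset_sum _ (Set.toFinite _)]
  congr 1
  exact sum_congr (by ext s; simp [mem_glamSubgroup, mul_assoc]) fun s _ => by simp [mul_assoc]

theorem exists_xiFun_ne_of_map_conj_ne (hJn : IsNilpotent J) {θ θ' : A → ℂ} (hθ1 : θ 1 = 1)
    (hθ'1 : θ' 1 = 1) {ε : AddChar F ℂ} (hε : ε ≠ 0) (w : Aˣ) {x : A}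
    (hx : x ∈ lamRadical J (extendLam hS lam))
    (hwx : ↑w⁻¹ * x * ↑w ∈ lamRadical J (extendLam hS lam))
    (hne : extendLam hS lam (↑w⁻¹ * x * ↑w) ≠ extendLam hS lam x) :
    ∃ u : Aˣ, ↑u ∈ GlamSet J hJr S e lam ∧ ↑(w⁻¹ * u * w) ∈ GlamSet J hJr S e lam ∧
      xiFun J S hS θ ε lam u ≠ xiFun J S hS θ' ε lam ↑(w⁻¹ * u * w) := by
  set L := extendLam hS lam
  obtain ⟨a, ha⟩ := AddChar.ne_zero_iff.mp hε
  set c : F := a / (L x - L (↑w⁻¹ * x * ↑w))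
  have hcx : c • x ∈ lamRadical J L := Submodule.smul_mem _ c hx
  have hwcx : ↑w⁻¹ * (c • x) * ↑w ∈ lamRadical J L := by
    rw [mul_smul_comm, smul_mul_assoc]; exact Submodule.smul_mem _ c hwx
  have hcL : L (c • x) - L (↑w⁻¹ * (c • x) * ↑w) = a := by
    rw [mul_smul_comm, smul_mul_assoc, map_smul, map_smul, smul_eq_mul, smul_eq_mul, ← mul_sub,
      div_mul_cancel₀ _ (sub_ne_zero.mpr hne.symm)]
  obtain ⟨n, hn⟩ := hJn
  have hunit : IsUnit (1 + c • x) := IsNilpotent.isUnit_one_add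
    ⟨n, by simpa [hn] using Ideal.pow_mem_pow hcx.1 n⟩
  have hu : ((w⁻¹ * hunit.unit * w : Aˣ) : A) = 1 + ↑w⁻¹ * (c • x) * ↑w := by
    rw [Units.val_mul, Units.val_mul, IsUnit.unit_spec, mul_add, add_mul, mul_one, Units.inv_mul]
  refine ⟨hunit.unit, by rw [IsUnit.unit_spec]; exact add_mem_GlamSet hS lam hJr .one hcx,
    by rw [hu]; exact add_mem_GlamSet hS lam hJr .one hwcx, fun h => ha ?_⟩
  rw [hu, IsUnit.unit_spec, xiFun_add hS lam θ ε S.one_mem hcx.1,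
    xiFun_add hS lam θ' ε S.one_mem hwcx.1, hθ1, hθ'1, one_mul, one_mul] at h
  rw [← hcL, AddChar.map_sub_eq_div, h, div_self (ε.val_isUnit _).ne_zero]

theorem exists_xiFun_ne_of_map_conj_eq [Finite A] (p : ℕ) [Fact p.Prime] [CharP F p]
    (hJn : IsNilpotent J) (hcomm : ∀ a b : A, a * b - b * a ∈ J)
    (hnil : ∀ s : A, IsNilpotent s → s ∈ J) (hL : IsCornerInvariant J e (extendLam hS lam))
    {θ θ' : A → ℂ} (hθ : IsMulOnHePrime S e θ) (hθ1 : θ 1 = 1) (hθ' : IsMulOnHePrime S e θ')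
    (hθ'1 : θ' 1 = 1) (ε : AddChar F ℂ) (w : Aˣ)
    (hconj : ∀ x ∈ lamRadical J (extendLam hS lam),
      ↑w⁻¹ * x * ↑w ∈ lamRadical J (extendLam hS lam) →
        extendLam hS lam (↑w⁻¹ * x * ↑w) = extendLam hS lam x)
    {h : A} (hh : MemHePrime S e h) (hne : θ h ≠ θ' h) :
    ∃ u : Aˣ, ↑u ∈ GlamSet J hJr S e lam ∧ ↑(w⁻¹ * u * w) ∈ GlamSet J hJr S e lam ∧
      xiFun J S hS θ ε lam u ≠ xiFun J S hS θ' ε lam ↑(w⁻¹ * u * w) := by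
  set L := extendLam hS lam
  obtain ⟨k, -, hk, hk'⟩ := hh.1.2
  let v : Aˣ := ⟨h, k, hk, hk'⟩
  have hLh (y : A) (hy : y ∈ J) : L (h * y) = L y := hL.map_mul_left hh.2.2 hy
  have hd : ↑w⁻¹ * h * ↑w - h ∈ lamRadical J L := by
    refine ⟨by simpa [mul_assoc] using hcomm (↑w⁻¹) (h * ↑w), fun u hu => ?_⟩
    rw [sub_mul, map_sub, map_conj_mul_eq_of_map_conj_eq hJr hJn w hconj hLh hu, hLh u hu,
      sub_self]
  have hwv : ((w⁻¹ * v * w : Aˣ) : A) = h + (↑w⁻¹ * h * ↑w - h) := by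
    rw [add_sub_cancel, Units.val_mul, Units.val_mul]
  refine ⟨v, by rw [← add_zero (v : A)]; exact add_mem_GlamSet hS lam hJr hh (zero_mem _),
    by rw [hwv]; exact add_mem_GlamSet hS lam hJr hh hd, fun heq => hne ?_⟩
  rw [hwv, ← add_zero (v : A), xiFun_add hS lam θ ε hh.1.1 J.zero_mem,
    xiFun_add hS lam θ' ε hh.1.1 hd.1, map_zero, AddChar.map_zero_eq_one, mul_one] at heq
  refine eq_of_eq_mul_of_coprime (coprime_orderOf_of_mem (v := v) p hS.disjoint hnil hh.1.1)
    (hθ.map_pow_orderOf hθ1 (v := v) hh) (hθ'.map_pow_orderOf hθ'1 (v := v) hh) ?_ heq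
  rw [← AddChar.map_nsmul_eq_pow, nsmul_eq_mul, CharP.cast_eq_zero, zero_mul,
    AddChar.map_zero_eq_one]

theorem exists_xiFun_ne [Finite A] (p : ℕ) [Fact p.Prime] [CharP F p] (hJn : IsNilpotent J)
    (hcomm : ∀ a b : A, a * b - b * a ∈ J) (hnil : ∀ s : A, IsNilpotent s → s ∈ J)
    (hL : IsCornerInvariant J e (extendLam hS lam)) {θ θ' : A → ℂ} (hθ : IsMulOnHePrime S e θ)
    (hθ1 : θ 1 = 1) (hθ' : IsMulOnHePrime S e θ') (hθ'1 : θ' 1 = 1)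
    (hne : ∃ h : A, MemHePrime S e h ∧ θ h ≠ θ' h) {ε : AddChar F ℂ} (hε : ε ≠ 0) (w : Aˣ) :
    ∃ u ∈ glamSubgroup hS lam hJr hL, w⁻¹ * u * w ∈ glamSubgroup hS lam hJr hL ∧
      xiFun J S hS θ ε lam u ≠ xiFun J S hS θ' ε lam ↑(w⁻¹ * u * w) := by
  by_cases hsep : ∃ x ∈ lamRadical J (extendLam hS lam),
      ↑w⁻¹ * x * ↑w ∈ lamRadical J (extendLam hS lam) ∧
        extendLam hS lam (↑w⁻¹ * x * ↑w) ≠ extendLam hS lam x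
  · obtain ⟨x, hx, hwx, hLx⟩ := hsep
    exact exists_xiFun_ne_of_map_conj_ne hS lam hJr hJn hθ1 hθ'1 hε w hx hwx hLx
  · obtain ⟨h, hh, hne⟩ := hne
    exact exists_xiFun_ne_of_map_conj_eq hS lam hJr p hJn hcomm hnil hL hθ hθ1 hθ' hθ'1 ε w
      (fun x hx hwx => not_not.mp fun hLx => hsep ⟨x, hx, hwx, hLx⟩) hh hne

end Setting

theorem chi_disjoint_of_theta_ne_general
    {F A : Type*} [Field F] [Fintype F] [Ring A] [Algebra F A] [FiniteDimensional F A]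
    (J : Ideal A) (hJ : J = (⊥ : Ideal A).jacobson)
    (hJr : ∀ x ∈ J, ∀ a : A, x * a ∈ J)
    (hred : ∀ a b : A, a * b - b * a ∈ J)
    (S : Subalgebra F A)
    (hS : IsCompl (Subalgebra.toSubmodule S) (Submodule.restrictScalars F J))
    (e : A)
    (lam : (Submodule.restrictScalars F J) →ₗ[F] F)
    (hlam : ∀ x (hx : x ∈ J), lam ⟨x, hx⟩ = lam ⟨e * x * e, hJr _ (J.mul_mem_left e hx) e⟩)
    (θ θ' : A → ℂ)
    (hθmul : ∀ h h' : A, MemHePrime S e h → MemHePrime S e h' → θ (h * h') = θ h * θ h')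
    (hθne : ∀ h : A, MemHePrime S e h → θ h ≠ 0)
    (hθ'mul : ∀ h h' : A, MemHePrime S e h → MemHePrime S e h' → θ' (h * h') = θ' h * θ' h')
    (hθ'ne : ∀ h : A, MemHePrime S e h → θ' h ≠ 0)
    (hne : ∃ h : A, MemHePrime S e h ∧ θ h ≠ θ' h)
    (ε : F → ℂ) (hεadd : ∀ a b : F, ε (a + b) = ε a * ε b) (hε0 : ε 0 = 1)
    (hεnt : ∃ a : F, ε a ≠ 1) :
    (Nat.card Aˣ : ℂ)⁻¹ *
      ∑ᶠ g : Aˣ, chiFun J hJr S hS e θ ε lam (g : A) *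
        (starRingEnd ℂ) (chiFun J hJr S hS e θ' ε lam (g : A)) = 0 := by
  classical
  have : Finite A := Module.finite_of_finite F
  have := Fintype.ofFinite Aˣ
  have := ringChar.charP F
  have : Fact (ringChar F).Prime := ⟨CharP.char_is_prime F _⟩
  obtain ⟨ε, rfl⟩ : ∃ ψ : AddChar F ℂ, ⇑ψ = ε := ⟨⟨ε, hε0, hεadd⟩, rfl⟩
  have hJn : IsNilpotent J := hJ ▸ IsArtinianRing.isNilpotent_jacobson_bot
  have hnil (s : A) (hs : IsNilpotent s) : s ∈ J :=
    hJ ▸ mem_jacobson_bot_of_isNilpotent (hJ ▸ hred) hs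
  have hL : IsCornerInvariant J e (extendLam hS lam) := fun x hx => by
    rw [extendLam_of_mem hS lam hx, extendLam_of_mem hS lam (hJr _ (J.mul_mem_left e hx) e),
      hlam x hx]
  have hθ1 := IsMulOnHePrime.map_one hθmul hθne
  have hθ'1 := IsMulOnHePrime.map_one hθ'mul hθ'ne
  have hξ := isLinearCharOn_xiFun hS lam hJr hL hθmul hθ1 ε
  have hξ' := isLinearCharOn_xiFun hS lam hJr hL hθ'mul hθ'1 ε
  have hsep := exists_xiFun_ne hS lam hJr _ hJn hred hnil hL hθmul hθ1 hθ'mul hθ'1 hne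
    (AddChar.ne_zero_iff.mpr hεnt)
  simp only [finsum_eq_sum_of_fintype, chiFun_eq_sum hS lam hJr hL, map_mul,
    mul_mul_mul_comm _ _ (conj _), ← mul_sum, sum_induced_mul_conj_induced_eq_zero _ hξ hξ' hsep,
    mul_zero]

/-- Proposition 4.3: if `θ ≠ θ'` (as linear characters of `H_{e'}`), then the induced
supercharacters `χ_{θ,λ}` and `χ_{θ',λ}` are disjoint; in particular their inner product
`|G|⁻¹ · Σ_{g ∈ G} χ_{θ,λ}(g) · conj(χ_{θ',λ}(g))` vanishes. -/
theorem chi_disjoint_of_theta_ne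
    {F A : Type*} [Field F] [Fintype F] [Ring A] [Algebra F A] [FiniteDimensional F A]
    (J : Ideal A) (hJ : J = (⊥ : Ideal A).jacobson)
    (hJr : ∀ x ∈ J, ∀ a : A, x * a ∈ J)
    (hred : ∀ a b : A, a * b - b * a ∈ J)
    (S : Subalgebra F A)
    (hS : IsCompl (Subalgebra.toSubmodule S) (Submodule.restrictScalars F J))
    (e : A) (he : IsIdempotentElem e) (heS : e ∈ S)
    (lam : (Submodule.restrictScalars F J) →ₗ[F] F)
    (hlam : ∀ x (hx : x ∈ J), lam ⟨x, hx⟩ = lam ⟨e * x * e, hJr _ (J.mul_mem_left e hx) e⟩)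
    (hreg : ¬ ∃ f : A, IsIdempotentElem f ∧ e * f * e = f ∧ f ≠ e ∧
      ∀ x (hx : x ∈ J), lam ⟨x, hx⟩ = lam ⟨f * x * f, hJr _ (J.mul_mem_left f hx) f⟩)
    (θ θ' : A → ℂ)
    (hθmul : ∀ h h' : A, MemHePrime S e h → MemHePrime S e h' → θ (h * h') = θ h * θ h')
    (hθne : ∀ h : A, MemHePrime S e h → θ h ≠ 0)
    (hθ'mul : ∀ h h' : A, MemHePrime S e h → MemHePrime S e h' → θ' (h * h') = θ' h * θ' h')
    (hθ'ne : ∀ h : A, MemHePrime S e h → θ' h ≠ 0)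
    (hne : ∃ h : A, MemHePrime S e h ∧ θ h ≠ θ' h)
    (ε : F → ℂ) (hεadd : ∀ a b : F, ε (a + b) = ε a * ε b) (hε0 : ε 0 = 1)
    (hεnt : ∃ a : F, ε a ≠ 1) :
    (Nat.card Aˣ : ℂ)⁻¹ *
      ∑ᶠ g : Aˣ, chiFun J hJr S hS e θ ε lam (g : A) *
        (starRingEnd ℂ) (chiFun J hJr S hS e θ' ε lam (g : A)) = 0 :=
  chi_disjoint_of_theta_ne_general J hJ hJr hred S hS e lam hlam θ θ' hθmul hθne hθ'mul hθ'ne hne ε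
    hεadd hε0 hεnt
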